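/- (Transition regime: vanishing fraction but growing number of outlier components.) In the high-dimensional geometric setting, assume K^{(d)} → ∞, K^{(d)}/d → 0, and K^{(d)} τ^{(d)}/d → r ∈ [0,∞) as d → ∞. Then almost surely (1/d) ‖X'^{(d)}‖² → r + σ² and (1/d) ‖X^{(d)} − X'^{(d)}‖² → r + 2σ² as d → ∞; in particular, if r = 0 the outlier asymptotically lies on the same sphere of radius (σ² d)^{1/2} as the inliers, while if r > 0 it is asymptotically separated from it. -/

import Mathlib

/-!
Since the outlier index sets are nested and their sizes `K` tend to infinity, they are the initial
segments of one injective enumeration of their union; sums over them are therefore partial sums of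
a single i.i.d. sequence, and the strong law of large numbers applies to them as well as to the
full index sets `{1, …, d}`. Splitting off the outlier coordinates,
`‖X'‖² = σ² ∑ z'ᵢ² + (τ - σ²) ∑_{I_out} z'ᵢ²` and
`⟨X, X'⟩ = σ (σ ∑ zᵢ z'ᵢ + (√τ - σ) ∑_{I_out} zᵢ z'ᵢ)`, so after dividing by `d` every term is a
coefficient times an empirical mean. The coefficients converge because `K / d → 0`,
`K τ / d → r`, and hence `K √τ / d = √(K τ / d · K / d) → 0`.
-/

open MeasureTheory ProbabilityTheory Filter Finset Asymptotics ENNReal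

/-- `a ≻ b`: the ratio `a n / b n` tends to a limit in `(1, ∞]`. -/
def SuccSeq (a b : ℕ → ℝ) : Prop :=
  (∃ L : ℝ, 1 < L ∧ Filter.Tendsto (fun n => a n / b n) Filter.atTop (nhds L)) ∨
    Filter.Tendsto (fun n => a n / b n) Filter.atTop Filter.atTop

open scoped Topology NNReal

section Enumeration

variable {α : Type*} [DecidableEq α] {S : ℕ → Finset α}

noncomputable def listOfIncrements (S : ℕ → Finset α) : ℕ → List α
  | 0 => (S 0).toList
  | m + 1 => listOfIncrements S m ++ (S (m + 1) \ S m).toList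

lemma listOfIncrements_prefix {m m' : ℕ} (h : m ≤ m') :
    listOfIncrements S m <+: listOfIncrements S m' := by
  induction h with
  | refl => exact List.prefix_refl _
  | step _ ih => exact ih.trans (List.prefix_append _ _)

lemma mem_listOfIncrements (hS : Monotone S) {m : ℕ} {a : α} :
    a ∈ listOfIncrements S m ↔ a ∈ S m := by
  induction m with
  | zero => simp [listOfIncrements]
  | succ m ih =>
    have := @hS m (m + 1) m.le_succ a
    simp only [listOfIncrements, List.mem_append, ih, mem_toList, Finset.mem_sdiff]
    tauto

lemma nodup_listOfIncrements (hS : Monotone S) (m : ℕ) : (listOfIncrements S m).Nodup := by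
  induction m with
  | zero => exact (S 0).nodup_toList
  | succ m ih =>
    refine ih.append (S (m + 1) \ S m).nodup_toList fun a ha hb => ?_
    rw [mem_listOfIncrements hS] at ha
    exact (mem_sdiff.1 (mem_toList.1 hb)).2 ha

lemma length_listOfIncrements (hS : Monotone S) (m : ℕ) :
    (listOfIncrements S m).length = (S m).card := by
  rw [← List.toFinset_card_of_nodup (nodup_listOfIncrements hS m)]
  congr 1
  ext a
  simp [mem_listOfIncrements hS]

theorem Monotone.exists_injective_forall_eq_image_range (hS : Monotone S)
    (hcard : ∀ n, ∃ m, n < (S m).card) :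
    ∃ e : ℕ → α, Function.Injective e ∧ ∀ m, S m = (range (S m).card).image e := by
  choose N hN using hcard
  have hlen := length_listOfIncrements hS
  let e n := (listOfIncrements S (N n))[n]'((hlen _).symm ▸ hN n)
  have he : ∀ m n (hn : n < (listOfIncrements S m).length), e n = (listOfIncrements S m)[n] :=
    fun m n hn => ((listOfIncrements_prefix (le_max_left (N n) m)).getElem _).trans
      ((listOfIncrements_prefix (le_max_right (N n) m)).getElem hn).symm
  refine ⟨e, fun a b hab => ?_, fun m => ?_⟩
  · set M := max (N a) (N b)
    have hlt : ∀ {k}, N k ≤ M → k < (listOfIncrements S M).length := fun h =>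
      (hN _).trans_le ((card_le_card (hS h)).trans (hlen M).ge)
    rwa [he M a (hlt (le_max_left _ _)), he M b (hlt (le_max_right _ _)),
      (nodup_listOfIncrements hS M).getElem_inj_iff] at hab
  · ext x
    simp only [mem_image, mem_range, ← mem_listOfIncrements hS, List.mem_iff_getElem, ← hlen]
    exact ⟨fun ⟨n, hn, hx⟩ => ⟨n, hn, (he m n hn).trans hx⟩,
      fun ⟨n, hn, hx⟩ => ⟨n, hn, (he m n hn).symm.trans hx⟩⟩

end Enumeration

section StrongLaw

variable {Ω : Type*} [MeasurableSpace Ω]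

theorem ae_tendsto_sum_div_card {μ : Measure Ω} {Y : ℕ → Ω → ℝ} (hint : Integrable (Y 0) μ)
    (hindep : Pairwise fun i j => Y i ⟂ᵢ[μ] Y j) (hident : ∀ i, IdentDistrib (Y i) (Y 0) μ μ)
    {S : ℕ → Finset ℕ} (hS : Monotone S) (hcard : Tendsto (fun m => (S m).card) atTop atTop) :
    ∀ᵐ ω ∂μ, Tendsto (fun m => (∑ i ∈ S m, Y i ω) / (S m).card) atTop (𝓝 μ[Y 0]) := by
  obtain ⟨e, he, hSe⟩ :=
    hS.exists_injective_forall_eq_image_range fun n => (hcard.eventually_gt_atTop n).exists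
  have hlaw := strong_law_ae_real (fun n => Y (e n)) ((hident (e 0)).integrable_iff.2 hint)
    (fun i j hij => hindep (he.ne hij)) fun i => (hident (e i)).trans (hident (e 0)).symm
  rw [(hident (e 0)).integral_eq] at hlaw
  filter_upwards [hlaw] with ω hω
  refine (hω.comp hcard).congr fun m => ?_
  simp only [Function.comp_apply]
  rw [← sum_image (f := fun i => Y i ω) he.injOn, ← hSe m]

variable {P : Measure Ω} {z z' : ℕ → Ω → ℝ}

lemma pairwise_indepFun_comp_prodMk (hz : ∀ i, Measurable (z i)) (hz' : ∀ i, Measurable (z' i))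
    (hindep : iIndepFun (Sum.elim z z') P) {g : ℝ × ℝ → ℝ} (hg : Measurable g) :
    Pairwise fun i j =>
      (fun ω => g (z i ω, z' i ω)) ⟂ᵢ[P] fun ω => g (z j ω, z' j ω) := fun i j hij =>
  (hindep.indepFun_prodMk_prodMk (Sum.forall.2 ⟨hz, hz'⟩) (.inl i) (.inr i) (.inl j) (.inr j)
    (by simpa using hij) (by simp) (by simp) (by simpa using hij)).comp hg hg

theorem ae_tendsto_sum_comp_prodMk_div_card [IsFiniteMeasure P] {ν ν' : Measure ℝ}
    (hz : ∀ i, Measurable (z i)) (hz' : ∀ i, Measurable (z' i))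
    (hindep : iIndepFun (Sum.elim z z') P)
    (hν : ∀ i, P.map (z i) = ν) (hν' : ∀ i, P.map (z' i) = ν')
    {g : ℝ × ℝ → ℝ} (hg : Measurable g) (hgi : Integrable g (ν.prod ν'))
    {S : ℕ → Finset ℕ} (hS : Monotone S) (hcard : Tendsto (fun m => (S m).card) atTop atTop) :
    ∀ᵐ ω ∂P, Tendsto (fun m => (∑ i ∈ S m, g (z i ω, z' i ω)) / (S m).card) atTop
      (𝓝 (∫ p, g p ∂ν.prod ν')) := by
  have hpm : ∀ i, Measurable fun ω => (z i ω, z' i ω) := fun i => (hz i).prodMk (hz' i)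
  have hlaw : ∀ i, P.map (fun ω => (z i ω, z' i ω)) = ν.prod ν' := fun i => by
    rw [(hindep.indepFun Sum.inl_ne_inr).map_prod_eq_prod_map_map (hz i).aemeasurable
      (hz' i).aemeasurable, hν, hν']
  have hident : ∀ i, IdentDistrib (fun ω => g (z i ω, z' i ω)) (fun ω => g (z 0 ω, z' 0 ω)) P P :=
    fun i => (IdentDistrib.mk (hpm i).aemeasurable (hpm 0).aemeasurable
      (by rw [hlaw, hlaw])).comp hg
  have hint : Integrable (fun ω => g (z 0 ω, z' 0 ω)) P :=
    (hlaw 0 ▸ hgi).comp_measurable (hpm 0)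
  have hmean : P[fun ω => g (z 0 ω, z' 0 ω)] = ∫ p, g p ∂ν.prod ν' := by
    rw [← hlaw 0, integral_map (hpm 0).aemeasurable hg.aestronglyMeasurable]
  simpa only [hmean] using ae_tendsto_sum_div_card hint
    (pairwise_indepFun_comp_prodMk hz hz' hindep hg) hident hS hcard

end StrongLaw

lemma integral_sq_gaussianReal (μ : ℝ) (v : ℝ≥0) : ∫ x, x ^ 2 ∂gaussianReal μ v = μ ^ 2 + v := by
  have := variance_eq_sub (memLp_id_gaussianReal (μ := μ) (v := v) 2)
  rw [variance_id_gaussianReal] at this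
  simp only [Pi.pow_apply, id_eq, integral_id_gaussianReal] at this
  linarith

theorem ae_tendsto_gaussian_moments_div_card {Ω : Type*} [MeasurableSpace Ω] {P : Measure Ω}
    [IsProbabilityMeasure P] {z z' : ℕ → Ω → ℝ}
    (hz : ∀ i, Measurable (z i)) (hz' : ∀ i, Measurable (z' i))
    (hindep : iIndepFun (Sum.elim z z') P)
    (hν : ∀ i, P.map (z i) = gaussianReal 0 1) (hν' : ∀ i, P.map (z' i) = gaussianReal 0 1)
    {S : ℕ → Finset ℕ} (hS : Monotone S) (hcard : Tendsto (fun m => (S m).card) atTop atTop) :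
    ∀ᵐ ω ∂P, Tendsto (fun m => (∑ i ∈ S m, z i ω ^ 2) / (S m).card) atTop (𝓝 1) ∧
      Tendsto (fun m => (∑ i ∈ S m, z' i ω ^ 2) / (S m).card) atTop (𝓝 1) ∧
      Tendsto (fun m => (∑ i ∈ S m, z i ω * z' i ω) / (S m).card) atTop (𝓝 0) := by
  have hsq : Integrable (fun x : ℝ => x ^ 2) (gaussianReal 0 1) :=
    (memLp_id_gaussianReal 2).integrable_sq
  have hid : Integrable (fun x : ℝ => x) (gaussianReal 0 1) :=
    (memLp_id_gaussianReal 1).integrable le_rfl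
  filter_upwards [
    ae_tendsto_sum_comp_prodMk_div_card hz hz' hindep hν hν' (g := fun p => p.1 ^ 2)
      (by fun_prop) (hsq.comp_fst _) hS hcard,
    ae_tendsto_sum_comp_prodMk_div_card hz hz' hindep hν hν' (g := fun p => p.2 ^ 2)
      (by fun_prop) (hsq.comp_snd _) hS hcard,
    ae_tendsto_sum_comp_prodMk_div_card hz hz' hindep hν hν' (g := fun p => p.1 * p.2)
      (by fun_prop) (hid.mul_prod hid) hS hcard] with ω h1 h2 h3
  rw [integral_fun_fst (fun x : ℝ => x ^ 2), integral_sq_gaussianReal] at h1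
  rw [integral_fun_snd (fun x : ℝ => x ^ 2), integral_sq_gaussianReal] at h2
  rw [integral_prod_mul (fun x : ℝ => x) (fun x : ℝ => x), integral_id_gaussianReal] at h3
  simp only [probReal_univ, one_smul, NNReal.coe_one, zero_pow two_ne_zero, zero_add, mul_zero]
    at h1 h2 h3
  exact ⟨h1, h2, h3⟩

lemma sum_ite_mem_mul {ι : Type*} [DecidableEq ι] {s t : Finset ι} (hst : s ⊆ t) (f : ι → ℝ)
    (a b : ℝ) :
    ∑ i ∈ t, (if i ∈ s then a * f i else b * f i) = b * ∑ i ∈ t, f i + (a - b) * ∑ i ∈ s, f i := by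
  have (i : ι) :
      (if i ∈ s then a * f i else b * f i) = b * f i + if i ∈ s then (a - b) * f i else 0 := by
    split_ifs <;> ring
  simp only [this, sum_add_distrib, sum_ite_mem, inter_eq_right.2 hst, mul_sum]

lemma tendsto_sum_ite_mem_mul_div {S T : ℕ → Finset ℕ} (hST : ∀ m, S m ⊆ T m) {f w : ℕ → ℝ}
    {a L L' ρ : ℝ}
    (hT : Tendsto (fun m => (∑ i ∈ T m, f i) / m) atTop (𝓝 L))
    (hS : Tendsto (fun m => (∑ i ∈ S m, f i) / (S m).card) atTop (𝓝 L'))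
    (hw : Tendsto (fun m => (S m).card * w m / m) atTop (𝓝 ρ))
    (hS0 : Tendsto (fun m => ((S m).card : ℝ) / m) atTop (𝓝 0)) :
    Tendsto (fun m => (∑ i ∈ T m, if i ∈ S m then w m * f i else a * f i) / m) atTop
      (𝓝 (a * L + ρ * L')) := by
  have key (m : ℕ) : (∑ i ∈ T m, if i ∈ S m then w m * f i else a * f i) / m =
      a * ((∑ i ∈ T m, f i) / m) +
        ((S m).card * w m / m - a * ((S m).card / m)) * ((∑ i ∈ S m, f i) / (S m).card) := by
    rw [sum_ite_mem_mul (hST m)]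
    rcases (S m).eq_empty_or_nonempty with h | h
    · simp [h, mul_div_assoc]
    · have : ((S m).card : ℝ) ≠ 0 := by positivity
      field_simp
  simp only [key]
  simpa using (hT.const_mul a).add ((hw.sub (hS0.const_mul a)).mul hS)

lemma tendsto_mul_sqrt_div {K τ : ℕ → ℝ} {r : ℝ} (hK : ∀ m, 0 ≤ K m) (hτ : ∀ m, 0 ≤ τ m)
    (hK0 : Tendsto (fun m => K m / m) atTop (𝓝 0))
    (hr : Tendsto (fun m => K m * τ m / m) atTop (𝓝 r)) :
    Tendsto (fun m => K m * √(τ m) / m) atTop (𝓝 0) := by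
  have h := (hr.mul hK0).sqrt
  rw [mul_zero, Real.sqrt_zero] at h
  refine h.congr fun m => ?_
  rw [show K m * τ m / m * (K m / m) = τ m * (K m / m) ^ 2 by ring, Real.sqrt_mul (hτ m),
    Real.sqrt_sq (div_nonneg (hK m) m.cast_nonneg), mul_comm, mul_div_right_comm]

theorem stmt18_general
    {Ω : Type} [MeasureSpace Ω] [IsProbabilityMeasure (ℙ : Measure Ω)]
    (σ : ℝ)
    (z z' : ℕ → Ω → ℝ)
    (hzmeas : ∀ i, Measurable (z i)) (hzmeas' : ∀ i, Measurable (z' i))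
    (hindep : iIndepFun (Sum.elim z z') ℙ)
    (hgauss : ∀ i, Measure.map (z i) ℙ = gaussianReal 0 1)
    (hgauss' : ∀ i, Measure.map (z' i) ℙ = gaussianReal 0 1)
    (Iout : ℕ → Finset ℕ)
    (hIsub : ∀ m, Iout m ⊆ Finset.Icc 1 m)
    (hInested : ∀ m, Iout m ⊆ Iout (m + 1))
    (τ : ℕ → ℝ) (hτpos : ∀ m, 0 < τ m)
    (hKinf : Tendsto (fun m => (Iout m).card) atTop atTop)
    (hK0 : Tendsto (fun m => ((Iout m).card : ℝ) / m) atTop (nhds 0))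
    (r : ℝ)
    (hr : Tendsto (fun m => ((Iout m).card : ℝ) * τ m / m) atTop (nhds r)) :
    ∀ᵐ ω ∂ℙ,
      Tendsto (fun m =>
          (∑ i ∈ Finset.Icc 1 m,
            (if i ∈ Iout m then Real.sqrt (τ m) * z' i ω else σ * z' i ω) ^ 2) / m)
        atTop (nhds (r + σ ^ 2)) ∧
      Tendsto (fun m =>
          (∑ i ∈ Finset.Icc 1 m,
            (σ * z i ω -
              (if i ∈ Iout m then Real.sqrt (τ m) * z' i ω else σ * z' i ω)) ^ 2) / m)
        atTop (nhds (r + 2 * σ ^ 2)) := by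
  have hcardIcc : Tendsto (fun m => (Icc 1 m).card) atTop atTop := by
    simp only [Nat.card_Icc, add_tsub_cancel_right]
    exact tendsto_id
  have hsqrt := tendsto_mul_sqrt_div (fun m => (Iout m).card.cast_nonneg)
    (fun m => (hτpos m).le) hK0 hr
  filter_upwards [ae_tendsto_gaussian_moments_div_card hzmeas hzmeas' hindep hgauss hgauss'
      (fun _ _ h => Icc_subset_Icc_right h) hcardIcc,
    ae_tendsto_gaussian_moments_div_card hzmeas hzmeas' hindep hgauss hgauss'
      (monotone_nat_of_le_succ hInested) hKinf] with ω ⟨hzT, hz'T, hzz'T⟩ ⟨_, hz'S, hzz'S⟩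
  simp only [Nat.card_Icc, add_tsub_cancel_right] at hzT hz'T hzz'T
  have hnorm := tendsto_sum_ite_mem_mul_div (a := σ ^ 2) hIsub hz'T hz'S hr hK0
  have hinner := tendsto_sum_ite_mem_mul_div (a := σ) hIsub hzz'T hzz'S hsqrt hK0
  have hsq (m i : ℕ) : (if i ∈ Iout m then √(τ m) * z' i ω else σ * z' i ω) ^ 2 =
      if i ∈ Iout m then τ m * z' i ω ^ 2 else σ ^ 2 * z' i ω ^ 2 := by
    split_ifs <;> simp only [mul_pow, Real.sq_sqrt (hτpos m).le]
  have hdist (m i : ℕ) :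
      (σ * z i ω - (if i ∈ Iout m then √(τ m) * z' i ω else σ * z' i ω)) ^ 2 =
        σ ^ 2 * z i ω ^ 2 - 2 * σ *
          (if i ∈ Iout m then √(τ m) * (z i ω * z' i ω) else σ * (z i ω * z' i ω)) +
        (if i ∈ Iout m then √(τ m) * z' i ω else σ * z' i ω) ^ 2 := by
    split_ifs <;> ring
  constructor
  · simp only [hsq]
    convert hnorm using 2
    ring
  · simp only [hdist, hsq, sum_add_distrib, sum_sub_distrib, ← mul_sum, add_div, sub_div,
      mul_div_assoc]
    convert ((hzT.const_mul (σ ^ 2)).sub (hinner.const_mul (2 * σ))).add hnorm using 2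
    ring

theorem stmt18
    {Ω : Type} [MeasureSpace Ω] [IsProbabilityMeasure (ℙ : Measure Ω)]
    (σ : ℝ) (hσ : 0 < σ)
    (z z' : ℕ → Ω → ℝ)
    (hzmeas : ∀ i, Measurable (z i)) (hzmeas' : ∀ i, Measurable (z' i))
    (hindep : iIndepFun (Sum.elim z z') ℙ)
    (hgauss : ∀ i, Measure.map (z i) ℙ = gaussianReal 0 1)
    (hgauss' : ∀ i, Measure.map (z' i) ℙ = gaussianReal 0 1)
    (Iout : ℕ → Finset ℕ)
    (hIsub : ∀ m, Iout m ⊆ Finset.Icc 1 m)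
    (hInested : ∀ m, Iout m ⊆ Iout (m + 1))
    (τ : ℕ → ℝ) (hτpos : ∀ m, 0 < τ m)
    (hKinf : Tendsto (fun m => (Iout m).card) atTop atTop)
    (hK0 : Tendsto (fun m => ((Iout m).card : ℝ) / m) atTop (nhds 0))
    (r : ℝ) (hr0 : 0 ≤ r)
    (hr : Tendsto (fun m => ((Iout m).card : ℝ) * τ m / m) atTop (nhds r)) :
    ∀ᵐ ω ∂ℙ,
      Tendsto (fun m =>
          (∑ i ∈ Finset.Icc 1 m,
            (if i ∈ Iout m then Real.sqrt (τ m) * z' i ω else σ * z' i ω) ^ 2) / m)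
        atTop (nhds (r + σ ^ 2)) ∧
      Tendsto (fun m =>
          (∑ i ∈ Finset.Icc 1 m,
            (σ * z i ω -
              (if i ∈ Iout m then Real.sqrt (τ m) * z' i ω else σ * z' i ω)) ^ 2) / m)
        atTop (nhds (r + 2 * σ ^ 2)) :=
  stmt18_general σ z z' hzmeas hzmeas' hindep hgauss hgauss' Iout hIsub hInested τ hτpos hKinf hK0 r
    hr
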